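/- arXiv:1912.02233 — 6 statements merged into one kernel-verified Lean document; each statement's English description precedes it below -/
import Mathlib

section
/- Suppose α ∈ (0,1) and let W be the top-left n×n block of P²(I_{n+k} − αP)⁻¹. Then W is symmetric (W = Wᵀ) and entrywise nonnegative (W ≥ 0). -/
/-!
Since `Q` is symmetric, `P = Γ⁻¹ Q` is self-adjoint for the bilinear form of `Γ`: `Pᵀ Γ = Γ P`.
Then so is every rational function of `P`, in particular `M = P² (I - αP)⁻¹`, and as `Γ` is the
identity on the first block, the top-left block of `M` is symmetric. Moreover `P` is row
stochastic, so `‖αP‖∞ < 1` and `(I - αP)⁻¹ = ∑ αᵐ Pᵐ` is entrywise nonnegative, hence so is `M`.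
-/

open Matrix

theorem Commute.ringInverse_right {M₀ : Type*} [MonoidWithZero M₀] {a b : M₀}
    (h : Commute a b) : Commute a (Ring.inverse b) := by
  by_cases hb : IsUnit b
  · obtain ⟨u, rfl⟩ := hb
    rw [Ring.inverse_unit]
    exact h.units_inv_right
  · rw [Ring.inverse_non_unit _ hb]
    exact Commute.zero_right a

namespace Matrix

section SelfAdjoint

variable {R : Type*} [CommRing R] {n : Type*} [Fintype n] {J A B : Matrix n n R}

lemma IsSelfAdjoint.sub (hA : J.IsSelfAdjoint A) (hB : J.IsSelfAdjoint B) :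
    J.IsSelfAdjoint (A - B) := by
  simp_all [Matrix.IsSelfAdjoint, Matrix.IsAdjointPair, Matrix.sub_mul, Matrix.mul_sub]

lemma IsSelfAdjoint.smul (hA : J.IsSelfAdjoint A) (c : R) : J.IsSelfAdjoint (c • A) := by
  simp_all [Matrix.IsSelfAdjoint, Matrix.IsAdjointPair]

lemma IsSelfAdjoint.mul_of_commute (hA : J.IsSelfAdjoint A) (hB : J.IsSelfAdjoint B)
    (hAB : Commute A B) : J.IsSelfAdjoint (A * B) := by
  unfold Matrix.IsSelfAdjoint Matrix.IsAdjointPair at *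
  rw [transpose_mul, Matrix.mul_assoc, hA, ← Matrix.mul_assoc, hB, Matrix.mul_assoc, hAB.eq]

lemma IsSelfAdjoint.toBlocks₁₁ {m : Type*} [Fintype m] {J₁ : Matrix n n R} {E : Matrix m m R}
    {M : Matrix (n ⊕ m) (n ⊕ m) R} (hM : (fromBlocks J₁ 0 0 E).IsSelfAdjoint M) :
    J₁.IsSelfAdjoint M.toBlocks₁₁ := by
  unfold Matrix.IsSelfAdjoint Matrix.IsAdjointPair at *
  rw [← fromBlocks_toBlocks M, fromBlocks_transpose, fromBlocks_multiply,
    fromBlocks_multiply] at hM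
  simpa using congrArg Matrix.toBlocks₁₁ hM

variable [DecidableEq n]

lemma isSelfAdjoint_one_iff_isSymm : (1 : Matrix n n R).IsSelfAdjoint A ↔ A.IsSymm := by
  simp [Matrix.IsSelfAdjoint, Matrix.IsAdjointPair, Matrix.IsSymm]

lemma isSelfAdjoint_one : J.IsSelfAdjoint 1 := by
  simp [Matrix.IsSelfAdjoint, Matrix.IsAdjointPair]

lemma IsSelfAdjoint.pow (hA : J.IsSelfAdjoint A) (m : ℕ) : J.IsSelfAdjoint (A ^ m) := by
  induction m with
  | zero => exact pow_zero A ▸ isSelfAdjoint_one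
  | succ m ih => exact pow_succ A m ▸ ih.mul_of_commute hA (Commute.self_pow A m).symm

lemma IsSelfAdjoint.nonsing_inv (hA : J.IsSelfAdjoint A) : J.IsSelfAdjoint A⁻¹ := by
  unfold Matrix.IsSelfAdjoint Matrix.IsAdjointPair at *
  by_cases hdet : IsUnit A.det
  · have hdetT : IsUnit Aᵀ.det := by rwa [det_transpose]
    calc A⁻¹ᵀ * J = A⁻¹ᵀ * (J * A) * A⁻¹ := by
          rw [Matrix.mul_assoc, Matrix.mul_assoc, mul_nonsing_inv A hdet, Matrix.mul_one]
      _ = A⁻¹ᵀ * (Aᵀ * J) * A⁻¹ := by rw [hA]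
      _ = J * A⁻¹ := by
          rw [transpose_nonsing_inv, ← Matrix.mul_assoc, nonsing_inv_mul _ hdetT,
            Matrix.one_mul]
  · simp [nonsing_inv_apply_not_isUnit A hdet]

lemma isSelfAdjoint_nonsing_inv_mul (hJ : J.IsSymm) (hJdet : IsUnit J.det) (hA : A.IsSymm) :
    J.IsSelfAdjoint (J⁻¹ * A) := by
  unfold Matrix.IsSelfAdjoint Matrix.IsAdjointPair
  rw [transpose_mul, hA.eq, transpose_nonsing_inv, hJ.eq, Matrix.mul_assoc, nonsing_inv_mul _ hJdet,
    ← Matrix.mul_assoc, mul_nonsing_inv _ hJdet, Matrix.mul_one, Matrix.one_mul]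

lemma IsSelfAdjoint.pow_mul_nonsing_inv_one_sub_smul (hA : J.IsSelfAdjoint A) (m : ℕ) (c : R) :
    J.IsSelfAdjoint (A ^ m * (1 - c • A)⁻¹) := by
  refine (hA.pow m).mul_of_commute (isSelfAdjoint_one.sub (hA.smul c)).nonsing_inv ?_
  rw [nonsing_inv_eq_ringInverse]
  exact ((Commute.one_right _).sub_right
    (((Commute.refl A).pow_left m).smul_right c)).ringInverse_right

end SelfAdjoint

section Nonneg

attribute [local instance] Matrix.linftyOpNormedAddCommGroup Matrix.linftyOpNormedRing
  Matrix.linftyOpNormedSpace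

variable {n : Type*} [Fintype n] [DecidableEq n]

lemma linfty_opNorm_le_one_of_mem_rowStochastic {P : Matrix n n ℝ}
    (hP : P ∈ rowStochastic ℝ n) : ‖P‖ ≤ 1 := by
  rw [linfty_opNorm_def, NNReal.coe_le_one, Finset.sup_le_iff]
  intro i _
  rw [← NNReal.coe_le_one, NNReal.coe_sum]
  simp only [coe_nnnorm, Real.norm_eq_abs, abs_of_nonneg (nonneg_of_mem_rowStochastic hP),
    sum_row_of_mem_rowStochastic hP, le_refl]

lemma nonsing_inv_one_sub_apply_nonneg {T : Matrix n n ℝ} (hT : ∀ i j, 0 ≤ T i j)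
    (hT1 : ‖T‖ < 1) (i j : n) : 0 ≤ (1 - T)⁻¹ i j := by
  have : CompleteSpace (Matrix n n ℝ) := FiniteDimensional.complete ℝ _
  have hgeom := hasSum_geom_series_inverse T hT1
  rw [← nonsing_inv_eq_ringInverse] at hgeom
  exact (Pi.hasSum.1 (Pi.hasSum.1 hgeom i) j).nonneg fun m => pow_apply_nonneg hT m i j

lemma nonsing_inv_one_sub_smul_apply_nonneg {P : Matrix n n ℝ} (hP : P ∈ rowStochastic ℝ n)
    {α : ℝ} (hα0 : 0 ≤ α) (hα1 : α < 1) (i j : n) : 0 ≤ (1 - α • P)⁻¹ i j := by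
  refine nonsing_inv_one_sub_apply_nonneg (fun i j => ?_) ?_ i j
  · exact mul_nonneg hα0 (nonneg_of_mem_rowStochastic hP)
  · calc ‖α • P‖ = α * ‖P‖ := by rw [norm_smul, Real.norm_of_nonneg hα0]
      _ ≤ α * 1 := mul_le_mul_of_nonneg_left (linfty_opNorm_le_one_of_mem_rowStochastic hP) hα0
      _ < 1 := by rwa [mul_one]

lemma pow_mul_nonsing_inv_one_sub_smul_apply_nonneg {P : Matrix n n ℝ}
    (hP : P ∈ rowStochastic ℝ n) {α : ℝ} (hα0 : 0 ≤ α) (hα1 : α < 1) (m : ℕ) (i j : n) :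
    0 ≤ (P ^ m * (1 - α • P)⁻¹) i j :=
  Finset.sum_nonneg fun z _ => mul_nonneg (nonneg_of_mem_rowStochastic (pow_mem hP m))
    (nonsing_inv_one_sub_smul_apply_nonneg hP hα0 hα1 z j)

end Nonneg

lemma nonsing_inv_diagonal_mul_mem_rowStochastic {n : Type*} [Fintype n] [DecidableEq n]
    {d : n → ℝ} (hd : ∀ i, 0 < d i) {Q : Matrix n n ℝ} (hQ : ∀ i j, 0 ≤ Q i j)
    (hQd : ∀ i, ∑ j, Q i j = d i) : (diagonal d)⁻¹ * Q ∈ rowStochastic ℝ n := by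
  have hdinv : (diagonal d)⁻¹ = diagonal d⁻¹ := by
    refine inv_eq_left_inv ?_
    rw [diagonal_mul_diagonal, ← diagonal_one]
    exact congrArg diagonal (funext fun i => inv_mul_cancel₀ (hd i).ne')
  rw [hdinv, mem_rowStochastic_iff_sum]
  simp only [diagonal_mul, Pi.inv_apply, ← Finset.mul_sum, hQd]
  exact ⟨fun i j => mul_nonneg (inv_nonneg.2 (hd i).le) (hQ i j),
    fun i => inv_mul_cancel₀ (hd i).ne'⟩

section BipartiteBlocks

variable {m n : Type*} {Z : Matrix m n ℝ} {G : Matrix n n ℝ} {η : ℝ}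

lemma fromBlocks_zero_transpose_apply_nonneg (hZ : ∀ i s, 0 ≤ Z i s) (hG : ∀ r s, 0 ≤ G r s)
    (hη : 0 ≤ η) : ∀ x y, 0 ≤ fromBlocks 0 Z Zᵀ (η • G) x y := by
  rintro (i | r) (j | s)
  · exact le_refl 0
  · exact hZ i s
  · exact hZ j r
  · exact mul_nonneg hη (hG r s)

lemma sum_fromBlocks_zero_transpose_apply [Fintype m] [Fintype n] (hZ : ∀ i, ∑ s, Z i s = 1)
    (x : m ⊕ n) :
    ∑ y, fromBlocks 0 Z Zᵀ (η • G) x y =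
      Sum.elim (fun _ => 1) (fun s => (∑ i, Z i s) + η * ∑ r, G s r) x := by
  rcases x with i | s <;> simp [Fintype.sum_sum_type, hZ, Finset.mul_sum]

end BipartiteBlocks

end Matrix

theorem W_symm_nonneg_general
    (n k : ℕ) (hn : 0 < n)
    (Z : Matrix (Fin n) (Fin k) ℝ)
    (hZpos : ∀ i s, 0 < Z i s)
    (hZrow : ∀ i, ∑ s, Z i s = 1)
    (G : Matrix (Fin k) (Fin k) ℝ)
    (hGsym : Gᵀ = G)
    (hG01 : ∀ r s, G r s = 0 ∨ G r s = 1)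
    (η : ℝ) (hη : 0 < η)
    (Q : Matrix (Fin n ⊕ Fin k) (Fin n ⊕ Fin k) ℝ)
    (hQ : Q = Matrix.fromBlocks 0 Z Zᵀ (η • G))
    (E : Matrix (Fin k) (Fin k) ℝ)
    (hE : E = Matrix.diagonal (fun s => (∑ i, Z i s) + η * ∑ r, G s r))
    (Γ : Matrix (Fin n ⊕ Fin k) (Fin n ⊕ Fin k) ℝ)
    (hΓ : Γ = Matrix.fromBlocks 1 0 0 E)
    (P : Matrix (Fin n ⊕ Fin k) (Fin n ⊕ Fin k) ℝ)
    (hP : P = Γ⁻¹ * Q)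
    (α : ℝ) (hα : α ∈ Set.Ioo (0 : ℝ) 1)
    (W : Matrix (Fin n) (Fin n) ℝ)
    (hW : W = (P ^ 2 * (1 - α • P)⁻¹).toBlocks₁₁) :
    Wᵀ = W ∧ ∀ i j, 0 ≤ W i j := by
  set d : Fin n ⊕ Fin k → ℝ := Sum.elim (fun _ => 1) (fun s => (∑ i, Z i s) + η * ∑ r, G s r)
  have hGnn : ∀ r s, 0 ≤ G r s := fun r s => (hG01 r s).elim (·.ge) (·.symm ▸ zero_le_one)
  have hΓd : Γ = diagonal d := by rw [hΓ, hE, ← diagonal_one, fromBlocks_diagonal]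
  have hdpos : ∀ x, 0 < d x := by
    have : Nonempty (Fin n) := ⟨⟨0, hn⟩⟩
    rintro (i | s)
    · exact one_pos
    · exact add_pos_of_pos_of_nonneg (Finset.sum_pos (fun i _ => hZpos i s) Finset.univ_nonempty)
        (mul_nonneg hη.le (Finset.sum_nonneg fun r _ => hGnn s r))
  have hPsa : Γ.IsSelfAdjoint P := by
    rw [hP, hΓd]
    exact isSelfAdjoint_nonsing_inv_mul (isSymm_diagonal d)
      ((isUnit_iff_isUnit_det _).1 (isUnit_diagonal.2 (Pi.isUnit_iff.2 (hdpos · |>.ne'.isUnit))))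
      (hQ ▸ isSymm_zero.fromBlocks rfl (IsSymm.smul hGsym η))
  have hPstoch : P ∈ rowStochastic ℝ (Fin n ⊕ Fin k) := by
    rw [hP, hΓd]
    exact nonsing_inv_diagonal_mul_mem_rowStochastic hdpos
      (hQ ▸ fromBlocks_zero_transpose_apply_nonneg (fun i s => (hZpos i s).le) hGnn hη.le)
      (hQ ▸ sum_fromBlocks_zero_transpose_apply hZrow)
  refine ⟨isSelfAdjoint_one_iff_isSymm.1 ?_, fun i j => ?_⟩
  · exact hW ▸ (hΓ ▸ hPsa.pow_mul_nonsing_inv_one_sub_smul 2 α).toBlocks₁₁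
  · exact hW ▸ pow_mul_nonsing_inv_one_sub_smul_apply_nonneg hPstoch hα.1.le hα.2 2 _ _

/-- For `α ∈ (0,1)`, the top-left `n × n` block `W` of `P²(I - αP)⁻¹` is
symmetric and entrywise nonnegative. -/
theorem W_symm_nonneg
    (n k : ℕ) (hn : 0 < n) (hk : 0 < k)
    (Z : Matrix (Fin n) (Fin k) ℝ)
    (hZpos : ∀ i s, 0 < Z i s)
    (hZrow : ∀ i, ∑ s, Z i s = 1)
    (G : Matrix (Fin k) (Fin k) ℝ)
    (hGsym : Gᵀ = G)
    (hG01 : ∀ r s, G r s = 0 ∨ G r s = 1)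
    (hGdiag : ∀ r, G r r = 0)
    (η : ℝ) (hη : 0 < η)
    (Q : Matrix (Fin n ⊕ Fin k) (Fin n ⊕ Fin k) ℝ)
    (hQ : Q = Matrix.fromBlocks 0 Z Zᵀ (η • G))
    (E : Matrix (Fin k) (Fin k) ℝ)
    (hE : E = Matrix.diagonal (fun s => (∑ i, Z i s) + η * ∑ r, G s r))
    (Γ : Matrix (Fin n ⊕ Fin k) (Fin n ⊕ Fin k) ℝ)
    (hΓ : Γ = Matrix.fromBlocks 1 0 0 E)
    (P : Matrix (Fin n ⊕ Fin k) (Fin n ⊕ Fin k) ℝ)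
    (hP : P = Γ⁻¹ * Q)
    (α : ℝ) (hα : α ∈ Set.Ioo (0 : ℝ) 1)
    (hinv : IsUnit (1 - α • P))
    (W : Matrix (Fin n) (Fin n) ℝ)
    (hW : W = (P ^ 2 * (1 - α • P)⁻¹).toBlocks₁₁) :
    Wᵀ = W ∧ ∀ i j, 0 ≤ W i j :=
  W_symm_nonneg_general n k hn Z hZpos hZrow G hGsym hG01 η hη Q hQ E hE Γ hΓ P hP α hα W hW
end

section
/- For α ∈ (0,1), every eigenvalue of the k×k matrix P̃ = α η E⁻¹ G + α² E⁻¹ ZᵀZ (i.e., every complex root of its characteristic polynomial) is real and lies in the open interval (−1, 1). -/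
/-!
Write `P̃ = E⁻¹ M` with `M = αηG + α²ZᵀZ`, a symmetric, entrywise nonnegative matrix. Since `E` is
a positive diagonal matrix, `P̃` has the same characteristic polynomial as the symmetric matrix
`E^{-1/2} M E^{-1/2}`, so its eigenvalues are real. Because the rows of `Z` sum to one, the `s`-th
row of `M` sums to `αη ∑ᵣ G s r + α² ∑ᵢ Z i s`, strictly less than `E s s = η ∑ᵣ G s r + ∑ᵢ Z i s`.
So `P̃` is nonnegative with row sums below one, and comparing the largest coordinate of an
eigenvector with its image bounds every eigenvalue in modulus by one.
-/

namespace Matrix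

variable {ι : Type*} [Fintype ι]

theorem norm_lt_of_mulVec_eq_smul {𝕜 : Type*} [NormedField 𝕜] {A : Matrix ι ι 𝕜} {c : ℝ}
    (hA : ∀ i, ∑ j, ‖A i j‖ < c) {v : ι → 𝕜} (hv : v ≠ 0) {μ : 𝕜} (hAv : A *ᵥ v = μ • v) :
    ‖μ‖ < c := by
  obtain ⟨t, ht⟩ := Function.ne_iff.mp hv
  obtain ⟨i, -, hi⟩ := Finset.univ.exists_max_image (‖v ·‖) ⟨t, Finset.mem_univ t⟩
  have hvi : 0 < ‖v i‖ := (norm_pos_iff.mpr ht).trans_le (hi t (Finset.mem_univ t))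
  refine lt_of_mul_lt_mul_right ?_ hvi.le
  calc ‖μ‖ * ‖v i‖ = ‖∑ j, A i j * v j‖ := by
        rw [← norm_mul, ← smul_eq_mul, ← Pi.smul_apply, ← hAv, mulVec, dotProduct]
    _ ≤ ∑ j, ‖A i j‖ * ‖v i‖ := by
        refine (norm_sum_le _ _).trans (Finset.sum_le_sum fun j _ => ?_)
        rw [norm_mul]
        exact mul_le_mul_of_nonneg_left (hi j (Finset.mem_univ j)) (norm_nonneg _)
    _ < c * ‖v i‖ := by
        rw [← Finset.sum_mul]
        exact mul_lt_mul_of_pos_right (hA i) hvi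

theorem sum_transpose_mul_self_apply {R κ : Type*} [Fintype κ] [CommSemiring R]
    {Z : Matrix κ ι R} (hZ : ∀ i, ∑ s, Z i s = 1) (s : ι) :
    ∑ r, (Zᵀ * Z) s r = ∑ i, Z i s := by
  simp only [mul_apply, transpose_apply]
  rw [Finset.sum_comm]
  simp [← Finset.mul_sum, hZ]

variable [DecidableEq ι]

theorem exists_mulVec_eq_smul_of_isRoot_charpoly {K : Type*} [Field K] {A : Matrix ι ι K} {μ : K}
    (hμ : A.charpoly.IsRoot μ) : ∃ v ≠ 0, A *ᵥ v = μ • v := by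
  rw [Polynomial.IsRoot, eval_charpoly, ← exists_mulVec_eq_zero_iff] at hμ
  obtain ⟨v, hv, hAv⟩ := hμ
  refine ⟨v, hv, ?_⟩
  rw [sub_mulVec, sub_eq_zero] at hAv
  simpa using hAv.symm

theorem inv_diagonal_of_ne_zero {K : Type*} [Field K] {d : ι → K} (hd : ∀ i, d i ≠ 0) :
    (diagonal d)⁻¹ = diagonal d⁻¹ := by
  refine inv_eq_left_inv ?_
  rw [diagonal_mul_diagonal, ← diagonal_one]
  exact congrArg diagonal (funext fun i => inv_mul_cancel₀ (hd i))

theorem im_eq_zero_of_isRoot_charpoly_map_ofReal {S : Matrix ι ι ℝ} (hS : S.IsHermitian) {μ : ℂ}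
    (hμ : (S.map Complex.ofReal).charpoly.IsRoot μ) : μ.im = 0 := by
  rw [show S.map Complex.ofReal = S.map Complex.ofRealHom from rfl, charpoly_map,
    hS.charpoly_eq] at hμ
  simp only [Polynomial.IsRoot, Polynomial.eval_map, Polynomial.eval₂_finsetProd,
    Polynomial.eval₂_sub, Polynomial.eval₂_X, Polynomial.eval₂_C, Finset.prod_eq_zero_iff,
    Finset.mem_univ, true_and, sub_eq_zero] at hμ
  obtain ⟨i, rfl⟩ := hμ
  simp

theorem im_eq_zero_of_isRoot_charpoly_diagonal_mul {d : ι → ℝ} (hd : 0 ≤ d) {M : Matrix ι ι ℝ}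
    (hM : M.IsHermitian) {μ : ℂ} (hμ : ((diagonal d * M).map Complex.ofReal).charpoly.IsRoot μ) :
    μ.im = 0 := by
  set R := diagonal fun i => √(d i)
  have hRR : diagonal d = R * R := by
    rw [diagonal_mul_diagonal]
    congr 1
    ext i
    exact (Real.mul_self_sqrt (hd i)).symm
  have hRH : Rᴴ = R := by simp [R]
  have hchar : (diagonal d * M).charpoly = (Rᴴ * M * R).charpoly := by
    rw [hRR, hRH, mul_assoc, charpoly_mul_comm]
  refine im_eq_zero_of_isRoot_charpoly_map_ofReal (isHermitian_conjTranspose_mul_mul R hM) ?_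
  rwa [show (Rᴴ * M * R).map Complex.ofReal = (Rᴴ * M * R).map Complex.ofRealHom from rfl,
    charpoly_map, ← hchar, ← charpoly_map]

theorem im_eq_zero_and_norm_lt_one_of_isRoot_charpoly_diagonal_inv_mul {d : ι → ℝ}
    {M : Matrix ι ι ℝ} (hM : M.IsHermitian) (hM_nonneg : ∀ i j, 0 ≤ M i j)
    (hMd : ∀ i, ∑ j, M i j < d i) {μ : ℂ}
    (hμ : ((diagonal d⁻¹ * M).map Complex.ofReal).charpoly.IsRoot μ) :
    μ.im = 0 ∧ ‖μ‖ < 1 := by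
  have hd : ∀ i, 0 < d i := fun i =>
    (Finset.sum_nonneg fun j _ => hM_nonneg i j).trans_lt (hMd i)
  refine ⟨im_eq_zero_of_isRoot_charpoly_diagonal_mul (fun i => (inv_pos.2 (hd i)).le) hM hμ, ?_⟩
  obtain ⟨v, hv, hAv⟩ := exists_mulVec_eq_smul_of_isRoot_charpoly hμ
  refine norm_lt_of_mulVec_eq_smul (fun i => ?_) hv hAv
  have hrow : ∑ j, ‖((diagonal d⁻¹ * M).map Complex.ofReal) i j‖ = (d i)⁻¹ * ∑ j, M i j := by
    rw [Finset.mul_sum]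
    refine Finset.sum_congr rfl fun j _ => ?_
    rw [map_apply, diagonal_mul, Pi.inv_apply, Complex.norm_real, Real.norm_of_nonneg
      (mul_nonneg (inv_pos.2 (hd i)).le (hM_nonneg i j))]
  rw [hrow, inv_mul_lt_one₀ (hd i)]
  exact hMd i

end Matrix

open Matrix

section

variable {ι κ : Type*} [Fintype κ] {Z : Matrix κ ι ℝ} {G : Matrix ι ι ℝ} {η α : ℝ}

theorem smul_add_smul_transpose_mul_self_nonneg (hZ : ∀ i s, 0 ≤ Z i s) (hG : ∀ r s, 0 ≤ G r s)
    {a b : ℝ} (ha : 0 ≤ a) (hb : 0 ≤ b) (s r : ι) : 0 ≤ (a • G + b • (Zᵀ * Z)) s r := by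
  have hZZ : 0 ≤ (Zᵀ * Z) s r := Finset.sum_nonneg fun i _ => mul_nonneg (hZ i s) (hZ i r)
  simp only [Matrix.add_apply, Matrix.smul_apply, smul_eq_mul]
  exact add_nonneg (mul_nonneg ha (hG s r)) (mul_nonneg hb hZZ)

theorem sum_smul_add_sq_smul_transpose_mul_self_lt [Fintype ι] (hZ : ∀ i, ∑ s, Z i s = 1)
    (hcol : ∀ s, 0 < ∑ i, Z i s) (hG : ∀ r s, 0 ≤ G r s) (hη : 0 ≤ η) (hα0 : 0 ≤ α)
    (hα1 : α < 1) (s : ι) :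
    ∑ r, ((α * η) • G + α ^ 2 • (Zᵀ * Z)) s r < (∑ i, Z i s) + η * ∑ r, G s r := by
  simp only [Matrix.add_apply, Matrix.smul_apply, smul_eq_mul, Finset.sum_add_distrib,
    ← Finset.mul_sum, sum_transpose_mul_self_apply hZ]
  have hdeg : 0 ≤ ∑ r, G s r := Finset.sum_nonneg fun r _ => hG s r
  have hα_sq : α ^ 2 < 1 := by nlinarith
  nlinarith [mul_nonneg (mul_nonneg hη hdeg) (sub_nonneg.2 hα1.le),
    mul_pos (hcol s) (sub_pos.2 hα_sq)]

end

theorem eigenvalues_Ptilde_real_mem_Ioo_general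
    (n k : ℕ) (hn : 0 < n)
    (Z : Matrix (Fin n) (Fin k) ℝ)
    (hZpos : ∀ i s, 0 < Z i s)
    (hZrow : ∀ i, ∑ s, Z i s = 1)
    (G : Matrix (Fin k) (Fin k) ℝ)
    (hGsym : Gᵀ = G)
    (hG01 : ∀ r s, G r s = 0 ∨ G r s = 1)
    (η : ℝ) (hη : 0 < η)
    (E : Matrix (Fin k) (Fin k) ℝ)
    (hE : E = Matrix.diagonal (fun s => (∑ i, Z i s) + η * ∑ r, G s r))
    (α : ℝ) (hα : α ∈ Set.Ioo (0 : ℝ) 1)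
    (Pt : Matrix (Fin k) (Fin k) ℝ)
    (hPt : Pt = (α * η) • (E⁻¹ * G) + α ^ 2 • (E⁻¹ * (Zᵀ * Z))) :
    ∀ μ : ℂ, ((Pt.map Complex.ofReal).charpoly).IsRoot μ →
      μ.im = 0 ∧ -1 < μ.re ∧ μ.re < 1 := by
  intro μ hμ
  obtain ⟨hα0, hα1⟩ := hα
  set d : Fin k → ℝ := fun s => (∑ i, Z i s) + η * ∑ r, G s r
  set M := (α * η) • G + α ^ 2 • (Zᵀ * Z)
  have hG_nonneg : ∀ r s, 0 ≤ G r s := fun r s => by rcases hG01 r s with h | h <;> simp [h]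
  have hZ_nonneg : ∀ i s, 0 ≤ Z i s := fun i s => (hZpos i s).le
  have hcol : ∀ s, 0 < ∑ i, Z i s := fun s =>
    Finset.sum_pos (fun i _ => hZpos i s) ⟨⟨0, hn⟩, Finset.mem_univ _⟩
  have hM : M.IsHermitian := by
    rw [isHermitian_iff_isSymm]
    exact (IsSymm.smul hGsym _).add (IsSymm.smul (transpose_mul Zᵀ Z) _)
  have hM_nonneg : ∀ s r, 0 ≤ M s r :=
    smul_add_smul_transpose_mul_self_nonneg hZ_nonneg hG_nonneg (by positivity) (sq_nonneg α)
  have hMd : ∀ s, ∑ r, M s r < d s :=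
    sum_smul_add_sq_smul_transpose_mul_self_lt hZrow hcol hG_nonneg hη.le hα0.le hα1
  have hd : ∀ s, d s ≠ 0 := fun s =>
    ((Finset.sum_nonneg fun r _ => hM_nonneg s r).trans_lt (hMd s)).ne'
  rw [hPt, hE, inv_diagonal_of_ne_zero hd, ← Matrix.mul_smul, ← Matrix.mul_smul,
    ← Matrix.mul_add] at hμ
  obtain ⟨him, hnorm⟩ :=
    im_eq_zero_and_norm_lt_one_of_isRoot_charpoly_diagonal_inv_mul hM hM_nonneg hMd hμ
  exact ⟨him, abs_lt.mp ((Complex.abs_re_le_norm μ).trans_lt hnorm)⟩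

/-- For `α ∈ (0,1)`, every eigenvalue of the `k × k` matrix
`P̃ = αη E⁻¹G + α² E⁻¹ZᵀZ` (i.e. every complex root of its characteristic polynomial)
is real and lies in the open interval `(-1, 1)`. -/
theorem eigenvalues_Ptilde_real_mem_Ioo
    (n k : ℕ) (hn : 0 < n) (hk : 0 < k)
    (Z : Matrix (Fin n) (Fin k) ℝ)
    (hZpos : ∀ i s, 0 < Z i s)
    (hZrow : ∀ i, ∑ s, Z i s = 1)
    (G : Matrix (Fin k) (Fin k) ℝ)
    (hGsym : Gᵀ = G)
    (hG01 : ∀ r s, G r s = 0 ∨ G r s = 1)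
    (hGdiag : ∀ r, G r r = 0)
    (η : ℝ) (hη : 0 < η)
    (E : Matrix (Fin k) (Fin k) ℝ)
    (hE : E = Matrix.diagonal (fun s => (∑ i, Z i s) + η * ∑ r, G s r))
    (α : ℝ) (hα : α ∈ Set.Ioo (0 : ℝ) 1)
    (Pt : Matrix (Fin k) (Fin k) ℝ)
    (hPt : Pt = (α * η) • (E⁻¹ * G) + α ^ 2 • (E⁻¹ * (Zᵀ * Z))) :
    ∀ μ : ℂ, ((Pt.map Complex.ofReal).charpoly).IsRoot μ →
      μ.im = 0 ∧ -1 < μ.re ∧ μ.re < 1 :=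
  eigenvalues_Ptilde_real_mem_Ioo_general n k hn Z hZpos hZrow G hGsym hG01 η hη E hE α hα Pt hPt
end

section
/- For α ∈ (0,1), the top-left n×n block W of P²(I_{n+k} − αP)⁻¹ admits the explicit formula W = Z (I_k − α η E⁻¹ G − α² E⁻¹ ZᵀZ)⁻¹ E⁻¹ Zᵀ. -/
open Matrix

/-- For `α ∈ (0,1)`, the top-left `n × n` block `W` of `P²(I - αP)⁻¹`
admits the explicit formula `W = Z (I_k - αη E⁻¹G - α² E⁻¹ZᵀZ)⁻¹ E⁻¹ Zᵀ`. -/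
theorem W_explicit_formula
    (n k : ℕ) (hn : 0 < n) (hk : 0 < k)
    (Z : Matrix (Fin n) (Fin k) ℝ)
    (hZpos : ∀ i s, 0 < Z i s)
    (hZrow : ∀ i, ∑ s, Z i s = 1)
    (G : Matrix (Fin k) (Fin k) ℝ)
    (hGsym : Gᵀ = G)
    (hG01 : ∀ r s, G r s = 0 ∨ G r s = 1)
    (hGdiag : ∀ r, G r r = 0)
    (η : ℝ) (hη : 0 < η)
    (Q : Matrix (Fin n ⊕ Fin k) (Fin n ⊕ Fin k) ℝ)
    (hQ : Q = Matrix.fromBlocks 0 Z Zᵀ (η • G))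
    (E : Matrix (Fin k) (Fin k) ℝ)
    (hE : E = Matrix.diagonal (fun s => (∑ i, Z i s) + η * ∑ r, G s r))
    (Γ : Matrix (Fin n ⊕ Fin k) (Fin n ⊕ Fin k) ℝ)
    (hΓ : Γ = Matrix.fromBlocks 1 0 0 E)
    (P : Matrix (Fin n ⊕ Fin k) (Fin n ⊕ Fin k) ℝ)
    (hP : P = Γ⁻¹ * Q)
    (α : ℝ) (hα : α ∈ Set.Ioo (0 : ℝ) 1)
    (hinv₁ : IsUnit (1 - α • P))
    (hinv₂ : IsUnit (1 - (α * η) • (E⁻¹ * G) - α ^ 2 • (E⁻¹ * (Zᵀ * Z)))) :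
    (P ^ 2 * (1 - α • P)⁻¹).toBlocks₁₁ =
      Z * (1 - (α * η) • (E⁻¹ * G) - α ^ 2 • (E⁻¹ * (Zᵀ * Z)))⁻¹ * E⁻¹ * Zᵀ := by
  have hNe : Nonempty (Fin n) := Fin.pos_iff_nonempty.mp hn
  -- E is invertible
  have hdpos : ∀ s : Fin k, 0 < (∑ i, Z i s) + η * ∑ r, G s r := by
    intro s
    have h1 : 0 < ∑ i, Z i s :=
      Finset.sum_pos (fun i _ => hZpos i s) Finset.univ_nonempty
    have h2 : (0 : ℝ) ≤ ∑ r, G s r :=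
      Finset.sum_nonneg (fun r _ => by rcases hG01 s r with h | h <;> simp [h])
    nlinarith
  have hEdet : IsUnit E.det := by
    rw [hE, Matrix.det_diagonal]
    exact isUnit_iff_ne_zero.mpr
      (Finset.prod_ne_zero_iff.mpr fun s _ => ne_of_gt (hdpos s))
  have hEE : E * E⁻¹ = 1 := Matrix.mul_nonsing_inv E hEdet
  set C := E⁻¹ * Zᵀ with hC
  set D := η • (E⁻¹ * G) with hD
  have hΓinv : Γ⁻¹ = Matrix.fromBlocks 1 0 0 E⁻¹ := by
    apply Matrix.inv_eq_right_inv
    rw [hΓ, Matrix.fromBlocks_multiply]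
    simp [hEE, Matrix.fromBlocks_one]
  have hPb : P = Matrix.fromBlocks 0 Z C D := by
    rw [hP, hΓinv, hQ, Matrix.fromBlocks_multiply]
    simp [hC, hD, Matrix.mul_smul]
  set M := 1 - (α * η) • (E⁻¹ * G) - α ^ 2 • (E⁻¹ * (Zᵀ * Z)) with hMdef
  have hM : M = 1 - α • D - α ^ 2 • (C * Z) := by
    rw [hMdef, hD, hC, smul_smul, Matrix.mul_assoc]
  have hMdet : IsUnit M.det := (Matrix.isUnit_iff_isUnit_det M).mp hinv₂
  have hMM : M * M⁻¹ = 1 := Matrix.mul_nonsing_inv M hMdet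
  set X := M⁻¹ * C with hX
  have hMX : M * X = C := by rw [hX, ← Matrix.mul_assoc, hMM, Matrix.one_mul]
  have key : X - α • (D * X) - α ^ 2 • (C * (Z * X)) = C := by
    rw [hM] at hMX
    calc X - α • (D * X) - α ^ 2 • (C * (Z * X))
        = (1 - α • D - α ^ 2 • (C * Z)) * X := by
          simp only [Matrix.sub_mul, Matrix.smul_mul, Matrix.one_mul, Matrix.mul_assoc]
      _ = C := hMX
  set N := Matrix.fromBlocks (1 + α ^ 2 • (Z * X)) (α • (Z * M⁻¹)) (α • X) M⁻¹ with hN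
  have h1P : (1 : Matrix (Fin n ⊕ Fin k) (Fin n ⊕ Fin k) ℝ) - α • P
      = Matrix.fromBlocks 1 (-(α • Z)) (-(α • C)) (1 - α • D) := by
    rw [hPb, Matrix.fromBlocks_smul, ← Matrix.fromBlocks_one, sub_eq_add_neg,
      Matrix.fromBlocks_neg, Matrix.fromBlocks_add]
    simp [sub_eq_add_neg]
  have hRight : ((1 : Matrix (Fin n ⊕ Fin k) (Fin n ⊕ Fin k) ℝ) - α • P) * N = 1 := by
    rw [h1P, hN, Matrix.fromBlocks_multiply, ← Matrix.fromBlocks_one]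
    refine Matrix.fromBlocks_inj.mpr ⟨?_, ?_, ?_, ?_⟩
    · simp only [Matrix.one_mul, Matrix.neg_mul, Matrix.smul_mul, Matrix.mul_smul,
        smul_smul, hX, Matrix.mul_assoc]
      module
    · simp only [Matrix.one_mul, Matrix.neg_mul, Matrix.smul_mul]
      module
    · have expand : -(α • C) * (1 + α ^ 2 • (Z * X)) + (1 - α • D) * (α • X)
          = α • (X - α • (D * X) - α ^ 2 • (C * (Z * X))) - α • C := by
        simp only [Matrix.neg_mul, Matrix.smul_mul, Matrix.mul_smul, Matrix.mul_one,
          Matrix.one_mul, Matrix.mul_add, Matrix.sub_mul, smul_sub, smul_smul,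
          Matrix.mul_assoc]
        module
      rw [expand, key, sub_self]
    · have expand : -(α • C) * (α • (Z * M⁻¹)) + (1 - α • D) * M⁻¹
          = (1 - α • D - α ^ 2 • (C * Z)) * M⁻¹ := by
        simp only [Matrix.neg_mul, Matrix.smul_mul, Matrix.mul_smul, Matrix.one_mul,
          Matrix.sub_mul, smul_smul, Matrix.mul_assoc]
        module
      rw [expand, ← hM, hMM]
  have hNinv : ((1 : Matrix (Fin n ⊕ Fin k) (Fin n ⊕ Fin k) ℝ) - α • P)⁻¹ = N :=
    Matrix.inv_eq_right_inv hRight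
  have keyB := congrArg (fun Y => Z * Y) key
  simp only [Matrix.mul_sub, Matrix.mul_smul] at keyB
  have hRHS : Z * M⁻¹ * E⁻¹ * Zᵀ = Z * X := by
    rw [hX, hC, Matrix.mul_assoc (Z * M⁻¹), Matrix.mul_assoc Z]
  rw [pow_two, hNinv, hPb, hN, Matrix.fromBlocks_multiply, Matrix.fromBlocks_multiply,
    Matrix.toBlocks_fromBlocks₁₁, hRHS]
  simp only [Matrix.zero_mul, Matrix.mul_zero, zero_add, add_zero,
    Matrix.mul_add, Matrix.mul_one, Matrix.mul_smul, Matrix.mul_assoc]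
  rw [← keyB]
  module
end

section
/- For α ∈ (0,1), every row sum of the matrix W = Z (I_k − α η E⁻¹ G − α² E⁻¹ ZᵀZ)⁻¹ E⁻¹ Zᵀ lies in the interval [0, 1/(1−α)]. -/
open Matrix

/-- For `α ∈ (0,1)`, every row sum of the matrix
`W = Z (I_k - αη E⁻¹G - α² E⁻¹ZᵀZ)⁻¹ E⁻¹ Zᵀ` lies in the interval `[0, 1/(1-α)]`. -/
theorem W_row_sums_mem_Icc
    (n k : ℕ) (hn : 0 < n) (hk : 0 < k)
    (Z : Matrix (Fin n) (Fin k) ℝ)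
    (hZpos : ∀ i s, 0 < Z i s)
    (hZrow : ∀ i, ∑ s, Z i s = 1)
    (G : Matrix (Fin k) (Fin k) ℝ)
    (hGsym : Gᵀ = G)
    (hG01 : ∀ r s, G r s = 0 ∨ G r s = 1)
    (hGdiag : ∀ r, G r r = 0)
    (η : ℝ) (hη : 0 < η)
    (E : Matrix (Fin k) (Fin k) ℝ)
    (hE : E = Matrix.diagonal (fun s => (∑ i, Z i s) + η * ∑ r, G s r))
    (α : ℝ) (hα : α ∈ Set.Ioo (0 : ℝ) 1)
    (hinv : IsUnit (1 - (α * η) • (E⁻¹ * G) - α ^ 2 • (E⁻¹ * (Zᵀ * Z))))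
    (W : Matrix (Fin n) (Fin n) ℝ)
    (hW : W = Z * (1 - (α * η) • (E⁻¹ * G) - α ^ 2 • (E⁻¹ * (Zᵀ * Z)))⁻¹ * E⁻¹ * Zᵀ)
    (hWsym : Wᵀ = W) (hWnn : ∀ i j, 0 ≤ W i j) :
    ∀ i, (∑ j, W i j) ∈ Set.Icc (0 : ℝ) (1 / (1 - α)) := by
  obtain ⟨hα0, hα1⟩ := hα
  have hGnn : ∀ r s, 0 ≤ G r s := fun r s => by rcases hG01 r s with h | h <;> simp [h]
  have ha : ∀ s, 0 < ∑ i, Z i s := fun s =>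
    Finset.sum_pos (fun i _ => hZpos i s) ⟨⟨0, hn⟩, Finset.mem_univ _⟩
  have hB : ∀ s, 0 ≤ ∑ r, G s r := fun s => Finset.sum_nonneg fun r _ => hGnn s r
  have hdpos : ∀ s, 0 < (∑ i, Z i s) + η * ∑ r, G s r := fun s =>
    add_pos_of_pos_of_nonneg (ha s) (mul_nonneg hη.le (hB s))
  have hEdet : IsUnit E.det := by
    rw [hE, Matrix.det_diagonal]
    exact (Finset.prod_pos (fun s _ => hdpos s)).ne'.isUnit
  set M := 1 - (α * η) • (E⁻¹ * G) - α ^ 2 • (E⁻¹ * (Zᵀ * Z)) with hM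
  have hMdet : IsUnit M.det := (Matrix.isUnit_iff_isUnit_det M).mp hinv
  have hEE : E * E⁻¹ = 1 := Matrix.mul_nonsing_inv E hEdet
  have hMM : M * M⁻¹ = 1 := Matrix.mul_nonsing_inv M hMdet
  set v : Fin k → ℝ := (M⁻¹ * E⁻¹ * Zᵀ).mulVec (fun _ => 1) with hv
  have hEM : E * M = E - (α * η) • G - α ^ 2 • (Zᵀ * Z) := by
    rw [hM, Matrix.mul_sub, Matrix.mul_sub, Matrix.mul_one, Matrix.mul_smul, Matrix.mul_smul,
      ← Matrix.mul_assoc, ← Matrix.mul_assoc, hEE, Matrix.one_mul, Matrix.one_mul]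
  have hprod : (E * M) * (M⁻¹ * E⁻¹ * Zᵀ) = Zᵀ := by
    calc (E * M) * (M⁻¹ * E⁻¹ * Zᵀ)
        = E * ((M * M⁻¹) * (E⁻¹ * Zᵀ)) := by
          simp only [Matrix.mul_assoc]
      _ = Zᵀ := by rw [hMM, Matrix.one_mul, ← Matrix.mul_assoc, hEE, Matrix.one_mul]
  have hkey : (E - (α * η) • G - α ^ 2 • (Zᵀ * Z)).mulVec v = Zᵀ.mulVec (fun _ => 1) := by
    rw [← hEM, hv, Matrix.mulVec_mulVec, hprod]
  have hcomp : ∀ s, ((∑ i, Z i s) + η * ∑ r, G s r) * v s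
      - (α * η) * (G.mulVec v) s - α ^ 2 * ((Zᵀ * Z).mulVec v) s = ∑ i, Z i s := by
    intro s
    have h1 := congrFun hkey s
    rw [Matrix.sub_mulVec, Matrix.sub_mulVec, Matrix.smul_mulVec,
      Matrix.smul_mulVec] at h1
    simp only [Pi.sub_apply, Pi.smul_apply, smul_eq_mul, hE, Matrix.mulVec_diagonal] at h1
    rw [h1]
    simp [Matrix.mulVec, dotProduct]
  obtain ⟨s₀, -, hs₀⟩ := Finset.exists_max_image Finset.univ v ⟨⟨0, hk⟩, Finset.mem_univ _⟩
  set c := v s₀ with hc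
  have hcle : c ≤ 1 / (1 - α) := by
    have hgv : (G.mulVec v) s₀ ≤ (∑ r, G s₀ r) * c := by
      have h0 : (G.mulVec v) s₀ = ∑ r, G s₀ r * v r := rfl
      rw [h0, Finset.sum_mul]
      exact Finset.sum_le_sum fun r _ =>
        mul_le_mul_of_nonneg_left (hs₀ r (Finset.mem_univ r)) (hGnn s₀ r)
    have hzv : ((Zᵀ * Z).mulVec v) s₀ ≤ (∑ i, Z i s₀) * c := by
      have h1 : ((Zᵀ * Z).mulVec v) s₀ = ∑ r, (∑ i, Z i s₀ * Z i r) * v r := by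
        simp [Matrix.mulVec, dotProduct, Matrix.mul_apply]
      have h2 : ∑ r, (∑ i, Z i s₀ * Z i r) * v r ≤ ∑ r, (∑ i, Z i s₀ * Z i r) * c :=
        Finset.sum_le_sum fun r _ => mul_le_mul_of_nonneg_left (hs₀ r (Finset.mem_univ r))
          (Finset.sum_nonneg fun i _ => mul_nonneg (hZpos i s₀).le (hZpos i r).le)
      have h3 : ∑ r, (∑ i, Z i s₀ * Z i r) * c = (∑ i, Z i s₀) * c := by
        rw [← Finset.sum_mul]
        congr 1
        rw [Finset.sum_comm]
        simp_rw [← Finset.mul_sum, hZrow, mul_one]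
      linarith [h1 ▸ h2.trans_eq h3]
    have heq := hcomp s₀
    rcases le_or_gt c 0 with h | h
    · have h1α : (0:ℝ) < 1 - α := by linarith
      have : (0:ℝ) < 1 / (1 - α) := by positivity
      linarith
    · rw [le_div_iff₀ (by linarith)]
      have key : (∑ i, Z i s₀) * (c * (1 - α)) ≤ ∑ i, Z i s₀ := by
        nlinarith [ha s₀, hB s₀,
          mul_le_mul_of_nonneg_left hgv (mul_pos hα0 hη).le,
          mul_le_mul_of_nonneg_left hzv (sq_nonneg α),
          mul_nonneg (mul_nonneg (mul_nonneg hη.le (hB s₀)) h.le) (by linarith : (0:ℝ) ≤ 1 - α),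
          mul_nonneg (mul_nonneg (mul_nonneg hα0.le (mul_pos (ha s₀) h).le)
            (by linarith : (0:ℝ) ≤ 1 - α)) (by norm_num : (0:ℝ) ≤ 1)]
      have h2 : (∑ i, Z i s₀) * (c * (1 - α)) ≤ (∑ i, Z i s₀) * 1 := by linarith
      exact le_of_mul_le_mul_left h2 (ha s₀)
  intro i
  refine ⟨Finset.sum_nonneg fun j _ => hWnn i j, ?_⟩
  have hrow : ∑ j, W i j = (Z.mulVec v) i := by
    have hW2 : W = Z * (M⁻¹ * E⁻¹ * Zᵀ) := by rw [hW]; simp only [Matrix.mul_assoc]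
    have h0 : ∑ j, W i j = (W.mulVec (fun _ => 1)) i := by
      simp [Matrix.mulVec, dotProduct]
    rw [h0, hW2, ← Matrix.mulVec_mulVec]
  have h1 : (Z.mulVec v) i ≤ c := by
    have : (Z.mulVec v) i = ∑ s, Z i s * v s := rfl
    rw [this]
    calc ∑ s, Z i s * v s ≤ ∑ s, Z i s * c :=
          Finset.sum_le_sum fun s _ =>
            mul_le_mul_of_nonneg_left (hs₀ s (Finset.mem_univ s)) (hZpos i s).le
      _ = c := by rw [← Finset.sum_mul, hZrow, one_mul]
  rw [hrow]
  exact h1.trans hcle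
end

section
/- For α ∈ (0,1), every row sum of the matrix W̃ = Z (I_k + α η E⁻¹ G + α² E⁻¹ ZᵀZ) E⁻¹ Zᵀ lies in the interval [0, 1 + α]. -/
open Matrix

/-- For `α ∈ (0,1)`, every row sum of the matrix
`W̃ = Z (I_k + αη E⁻¹G + α² E⁻¹ZᵀZ) E⁻¹ Zᵀ` lies in the interval `[0, 1 + α]`. -/
theorem Wtilde_row_sums_mem_Icc
    (n k : ℕ) (hn : 0 < n) (hk : 0 < k)
    (Z : Matrix (Fin n) (Fin k) ℝ)
    (hZpos : ∀ i s, 0 < Z i s)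
    (hZrow : ∀ i, ∑ s, Z i s = 1)
    (G : Matrix (Fin k) (Fin k) ℝ)
    (hGsym : Gᵀ = G)
    (hG01 : ∀ r s, G r s = 0 ∨ G r s = 1)
    (hGdiag : ∀ r, G r r = 0)
    (η : ℝ) (hη : 0 < η)
    (E : Matrix (Fin k) (Fin k) ℝ)
    (hE : E = Matrix.diagonal (fun s => (∑ i, Z i s) + η * ∑ r, G s r))
    (α : ℝ) (hα : α ∈ Set.Ioo (0 : ℝ) 1)
    (Wt : Matrix (Fin n) (Fin n) ℝ)
    (hWt : Wt = Z * (1 + (α * η) • (E⁻¹ * G) + α ^ 2 • (E⁻¹ * (Zᵀ * Z))) * (E⁻¹ * Zᵀ)) :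
    ∀ i, (∑ j, Wt i j) ∈ Set.Icc (0 : ℝ) (1 + α) := by
  obtain ⟨hα0, hα1⟩ := hα
  set c : Fin k → ℝ := fun s => ∑ i, Z i s with hc
  set g : Fin k → ℝ := fun s => ∑ r, G s r with hg
  set e : Fin k → ℝ := fun s => c s + η * g s with he
  have hcpos : ∀ s, 0 < c s := fun s =>
    Finset.sum_pos (fun i _ => hZpos i s) ⟨⟨0, hn⟩, Finset.mem_univ _⟩
  have hGnn : ∀ r s, 0 ≤ G r s := fun r s => by rcases hG01 r s with h | h <;> rw [h] <;> norm_num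
  have hgnn : ∀ s, 0 ≤ g s := fun s => Finset.sum_nonneg fun r _ => hGnn s r
  have hepos : ∀ s, 0 < e s :=
    fun s => add_pos_of_pos_of_nonneg (hcpos s) (mul_nonneg hη.le (hgnn s))
  have hEinv : E⁻¹ = Matrix.diagonal (fun s => (e s)⁻¹) := by
    apply Matrix.inv_eq_right_inv
    rw [hE, Matrix.diagonal_mul_diagonal]
    have h1 : (fun i => e i * (e i)⁻¹) = fun _ => (1:ℝ) :=
      funext fun s => mul_inv_cancel₀ (hepos s).ne'
    rw [h1, Matrix.diagonal_one]
  set D : Matrix (Fin k) (Fin k) ℝ := Matrix.diagonal (fun s => (e s)⁻¹) with hD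
  set M : Matrix (Fin k) (Fin k) ℝ :=
    1 + (α * η) • (D * G) + α ^ 2 • (D * (Zᵀ * Z)) with hM
  have hWt' : Wt = (Z * M) * (D * Zᵀ) := by rw [hWt, hEinv]
  intro i
  -- entries of Z * M
  have hZD : ∀ a b, (Z * D) a b = Z a b * (e b)⁻¹ := fun a b => by
    rw [hD, Matrix.mul_diagonal]
  have hZTZ : ∀ (a b : Fin k), (Zᵀ * Z) a b = ∑ j, Z j a * Z j b := fun a b => by
    rw [Matrix.mul_apply]
    simp [Matrix.transpose_apply]
  have hZM' : Z * M = Z + (α * η) • (Z * D * G) + α ^ 2 • (Z * D * (Zᵀ * Z)) := by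
    rw [hM, Matrix.mul_add, Matrix.mul_add, Matrix.mul_one, Matrix.mul_smul, Matrix.mul_smul,
      ← Matrix.mul_assoc, ← Matrix.mul_assoc]
  have h2 : ∀ s, (Z * D * G) i s = ∑ r, Z i r * ((e r)⁻¹ * G r s) := by
    intro s
    rw [Matrix.mul_apply]
    exact Finset.sum_congr rfl fun r _ => by rw [hZD, mul_assoc]
  have h3 : ∀ s, (Z * D * (Zᵀ * Z)) i s = ∑ r, Z i r * ((e r)⁻¹ * ∑ j, Z j r * Z j s) := by
    intro s
    rw [Matrix.mul_apply]
    exact Finset.sum_congr rfl fun r _ => by rw [hZD, hZTZ, mul_assoc]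
  have hZM : ∀ s, (Z * M) i s =
      Z i s + α * η * ∑ r, Z i r * ((e r)⁻¹ * G r s)
        + α ^ 2 * ∑ r, Z i r * ((e r)⁻¹ * ∑ j, Z j r * Z j s) := by
    intro s
    rw [hZM', Matrix.add_apply, Matrix.add_apply, Matrix.smul_apply, Matrix.smul_apply,
      smul_eq_mul, smul_eq_mul, h2, h3]
  have hZMnn : ∀ s, 0 ≤ (Z * M) i s := by
    intro s
    rw [hZM s]
    have h1 : (0:ℝ) ≤ ∑ r, Z i r * ((e r)⁻¹ * G r s) :=
      Finset.sum_nonneg fun r _ => mul_nonneg (hZpos i r).le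
        (mul_nonneg (inv_nonneg.2 (hepos r).le) (hGnn r s))
    have h2 : (0:ℝ) ≤ ∑ r, Z i r * ((e r)⁻¹ * ∑ j, Z j r * Z j s) :=
      Finset.sum_nonneg fun r _ => mul_nonneg (hZpos i r).le
        (mul_nonneg (inv_nonneg.2 (hepos r).le)
          (Finset.sum_nonneg fun j _ => mul_nonneg (hZpos j r).le (hZpos j s).le))
    have := hZpos i s
    nlinarith [mul_nonneg (mul_nonneg hα0.le hη.le) h1, mul_nonneg (sq_nonneg α) h2]
  -- row sum formula
  have hrow : ∑ j, Wt i j = ∑ s, (Z * M) i s * ((e s)⁻¹ * c s) := by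
    rw [hWt']
    simp only [hD, Matrix.mul_apply, Matrix.diagonal_apply, Matrix.transpose_apply, ite_mul,
      zero_mul, Finset.sum_ite_eq, Finset.mem_univ, if_true]
    rw [Finset.sum_comm]
    refine Finset.sum_congr rfl fun s _ => ?_
    rw [← Finset.mul_sum, ← Finset.mul_sum]
  have hce0 : ∀ s, 0 ≤ (e s)⁻¹ * c s :=
    fun s => mul_nonneg (inv_nonneg.2 (hepos s).le) (hcpos s).le
  have hce1 : ∀ s, (e s)⁻¹ * c s ≤ 1 := by
    intro s
    rw [inv_mul_le_iff₀ (hepos s), mul_one]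
    have := mul_nonneg hη.le (hgnn s)
    simp only [he]
    linarith
  constructor
  · rw [hrow]
    exact Finset.sum_nonneg fun s _ => mul_nonneg (hZMnn s) (hce0 s)
  · -- upper bound
    have step1 : ∑ j, Wt i j ≤ ∑ s, (Z * M) i s := by
      rw [hrow]
      exact Finset.sum_le_sum fun s _ => mul_le_of_le_one_right (hZMnn s) (hce1 s)
    have hsumG : ∑ s, ∑ r, Z i r * ((e r)⁻¹ * G r s)
        = ∑ r, Z i r * ((e r)⁻¹ * g r) := by
      rw [Finset.sum_comm]
      refine Finset.sum_congr rfl fun r _ => ?_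
      rw [← Finset.mul_sum, ← Finset.mul_sum]
    have hsumZZ : ∑ s, ∑ r, Z i r * ((e r)⁻¹ * ∑ j, Z j r * Z j s)
        = ∑ r, Z i r * ((e r)⁻¹ * c r) := by
      rw [Finset.sum_comm]
      refine Finset.sum_congr rfl fun r _ => ?_
      rw [← Finset.mul_sum, ← Finset.mul_sum]
      congr 2
      rw [Finset.sum_comm]
      simp only [hc]
      refine Finset.sum_congr rfl fun j _ => ?_
      rw [← Finset.mul_sum, hZrow j, mul_one]
    have step2 : ∑ s, (Z * M) i s
        = 1 + ∑ r, Z i r * ((e r)⁻¹ * (α * η * g r + α ^ 2 * c r)) := by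
      simp only [hZM]
      rw [Finset.sum_add_distrib, Finset.sum_add_distrib, hZrow i,
        ← Finset.mul_sum, ← Finset.mul_sum, hsumG, hsumZZ,
        Finset.mul_sum, Finset.mul_sum, add_assoc, ← Finset.sum_add_distrib]
      congr 1
      refine Finset.sum_congr rfl fun r _ => ?_
      ring
    have step3 : ∑ r, Z i r * ((e r)⁻¹ * (α * η * g r + α ^ 2 * c r)) ≤ α := by
      have : ∀ r ∈ Finset.univ, Z i r * ((e r)⁻¹ * (α * η * g r + α ^ 2 * c r))
          ≤ Z i r * α := by
        intro r _
        refine mul_le_mul_of_nonneg_left ?_ (hZpos i r).le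
        rw [inv_mul_le_iff₀ (hepos r)]
        have h1 : α * c r ≤ c r := by nlinarith [hcpos r]
        have h2 : (0:ℝ) ≤ η * g r := mul_nonneg hη.le (hgnn r)
        simp only [he]
        nlinarith
      calc ∑ r, Z i r * ((e r)⁻¹ * (α * η * g r + α ^ 2 * c r))
          ≤ ∑ r, Z i r * α := Finset.sum_le_sum this
        _ = α := by rw [← Finset.sum_mul, hZrow i, one_mul]
    linarith [step1, step2.le, step2.ge]
end

section
/- Let W be an n×n symmetric entrywise nonnegative real matrix with all row sums strictly positive, D = diag(W 1_n), S = D^{-1/2} W D^{-1/2}, μ > 0, and Y ∈ ℝ^{n×c}. Then (1+μ)I_n − S is invertible, and F* = μ((1+μ)I_n − S)⁻¹ Y is the unique minimizer over F ∈ ℝ^{n×c} of the objective L(F) = trace(Fᵀ(I_n − S)F) + μ‖F − Y‖²_F, where ‖·‖_F is the Frobenius norm. -/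
/-!
With `D = diag(W 1)` one has `1 - S = D^{-1/2} (D - W) D^{-1/2}`, and
`2 xᵀ (D - W) x = ∑ᵢⱼ Wᵢⱼ (xᵢ - xⱼ)²`, so `1 - S` is positive semidefinite and
`A = (1 + μ) I - S = (1 - S) + μ I` is positive definite, hence invertible.
Since `A F* = μ Y`, completing the square gives `L(F) = L(F*) + tr ((F - F*)ᵀ A (F - F*))`,
and the last term is nonnegative, vanishing only at `F = F*`.
-/

namespace Matrix

variable {ι κ R : Type*} [Fintype ι] [Fintype κ]

section CommRing

variable [CommRing R]

theorem trace_add_transpose_mul_mul_add {M : Matrix ι ι R} (hM : Mᵀ = M) (P G : Matrix ι κ R) :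
    trace ((P + G)ᵀ * M * (P + G)) =
      trace (Pᵀ * M * P) + 2 * trace (Gᵀ * M * P) + trace (Gᵀ * M * G) := by
  have hsymm : trace (Pᵀ * M * G) = trace (Gᵀ * M * P) := by
    rw [← trace_transpose, transpose_mul, transpose_mul, transpose_transpose, hM,
      Matrix.mul_assoc]
  simp only [transpose_add, Matrix.add_mul, Matrix.mul_add, trace_add, hsymm]
  ring

theorem sum_sum_sq_eq_trace_transpose_mul_self (X : Matrix ι κ R) :
    ∑ i, ∑ j, X i j ^ 2 = trace (Xᵀ * X) := by
  rw [Finset.sum_comm]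
  simp [trace, mul_apply, sq]

theorem two_mul_dotProduct_diagonal_sum_sub_mulVec [DecidableEq ι] {W : Matrix ι ι R}
    (hW : Wᵀ = W) (x : ι → R) :
    2 * (x ⬝ᵥ (diagonal (fun i => ∑ j, W i j) - W) *ᵥ x) =
      ∑ i, ∑ j, W i j * (x i - x j) ^ 2 := by
  have hquad : x ⬝ᵥ (diagonal (fun i => ∑ j, W i j) - W) *ᵥ x =
      ∑ i, ∑ j, W i j * x i ^ 2 - ∑ i, ∑ j, W i j * (x i * x j) := by
    rw [sub_mulVec, dotProduct_sub]
    simp only [dotProduct, mulVec_diagonal]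
    simp only [Matrix.mulVec, dotProduct, Finset.mul_sum, Finset.sum_mul]
    congr 1 <;> exact Finset.sum_congr rfl fun i _ => Finset.sum_congr rfl fun j _ => by ring
  have hswap : ∑ i, ∑ j, W i j * x j ^ 2 = ∑ i, ∑ j, W i j * x i ^ 2 := by
    rw [Finset.sum_comm]
    exact Finset.sum_congr rfl fun i _ => Finset.sum_congr rfl fun j _ => by
      rw [← transpose_apply W, hW]
  have hexpand : ∑ i, ∑ j, W i j * (x i - x j) ^ 2 =
      ∑ i, ∑ j, W i j * x i ^ 2 - 2 * ∑ i, ∑ j, W i j * (x i * x j) +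
        ∑ i, ∑ j, W i j * x j ^ 2 := by
    simp only [Finset.mul_sum, ← Finset.sum_sub_distrib, ← Finset.sum_add_distrib]
    exact Finset.sum_congr rfl fun i _ => Finset.sum_congr rfl fun j _ => by ring
  rw [hquad, hexpand, hswap]
  ring

/-- The objective of the local and global consistency (LGC) method. -/
def lgcObjective (M : Matrix ι ι R) (μ : R) (Y F : Matrix ι κ R) : R :=
  trace (Fᵀ * M * F) + μ * ∑ i, ∑ j, (F i j - Y i j) ^ 2

theorem lgcObjective_eq_add [DecidableEq ι] {M : Matrix ι ι R} (hM : Mᵀ = M) {μ : R}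
    {Y P : Matrix ι κ R} (hP : (M + μ • 1) * P = μ • Y) (F : Matrix ι κ R) :
    lgcObjective M μ Y F =
      lgcObjective M μ Y P + trace ((F - P)ᵀ * (M + μ • 1) * (F - P)) := by
  obtain ⟨G, rfl⟩ : ∃ G, F = P + G := ⟨F - P, by abel⟩
  have hfrob (X : Matrix ι κ R) :
      ∑ i, ∑ j, (X i j - Y i j) ^ 2 = trace ((X - Y)ᵀ * (1 : Matrix ι ι R) * (X - Y)) := by
    rw [Matrix.mul_one, ← sum_sum_sq_eq_trace_transpose_mul_self]
    rfl
  have hcross : trace (Gᵀ * M * P) + μ * trace (Gᵀ * (1 : Matrix ι ι R) * (P - Y)) = 0 := by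
    have h : Gᵀ * M * P + μ • (Gᵀ * (1 : Matrix ι ι R) * (P - Y)) =
        Gᵀ * ((M + μ • 1) * P - μ • Y) := by
      simp only [Matrix.mul_one, Matrix.mul_sub, Matrix.add_mul, Matrix.mul_add,
        Matrix.mul_smul, Matrix.smul_mul, Matrix.one_mul, Matrix.mul_assoc, smul_sub]
      abel
    rw [hP, sub_self, Matrix.mul_zero] at h
    rw [← smul_eq_mul, ← trace_smul, ← trace_add, h, trace_zero]
  have hsplit : trace (Gᵀ * (M + μ • 1) * G) =
      trace (Gᵀ * M * G) + μ * trace (Gᵀ * (1 : Matrix ι ι R) * G) := by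
    rw [Matrix.mul_add, Matrix.add_mul, trace_add, Matrix.mul_smul, Matrix.smul_mul, trace_smul,
      smul_eq_mul]
  have hPY : P + G - Y = (P - Y) + G := by abel
  simp only [lgcObjective, hfrob, hPY, add_sub_cancel_left, hsplit,
    trace_add_transpose_mul_mul_add hM, trace_add_transpose_mul_mul_add transpose_one]
  linear_combination 2 * hcross

end CommRing

open scoped ComplexOrder in
theorem PosDef.trace_conjTranspose_mul_mul_eq_zero_iff {𝕜 : Type*} [RCLike 𝕜] {A : Matrix ι ι 𝕜}
    (hA : A.PosDef) (G : Matrix ι κ 𝕜) : trace (Gᴴ * A * G) = 0 ↔ G = 0 := by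
  refine ⟨fun h => ?_, by rintro rfl; simp⟩
  have hzero : Gᴴ * A * G = 0 := (hA.posSemidef.conjTranspose_mul_mul_same G).trace_eq_zero_iff.mp h
  refine ext_iff_mulVec.mpr fun v => ?_
  by_contra hGv
  rw [zero_mulVec] at hGv
  have hpos : 0 < star v ⬝ᵥ (Gᴴ * A * G) *ᵥ v := by
    simpa only [star_mulVec, dotProduct_mulVec, vecMul_vecMul] using hA.dotProduct_mulVec_pos hGv
  simp [hzero] at hpos

section Real

variable [DecidableEq ι]

theorem posSemidef_diagonal_sum_sub {W : Matrix ι ι ℝ} (hW : Wᵀ = W) (hW₀ : ∀ i j, 0 ≤ W i j) :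
    (diagonal (fun i => ∑ j, W i j) - W).PosSemidef := by
  refine PosSemidef.of_dotProduct_mulVec_nonneg ?_ fun x => ?_
  · rw [IsHermitian, conjTranspose_eq_transpose_of_trivial, transpose_sub, diagonal_transpose, hW]
  · have h := two_mul_dotProduct_diagonal_sum_sub_mulVec hW x
    have hsum : 0 ≤ ∑ i, ∑ j, W i j * (x i - x j) ^ 2 :=
      Finset.sum_nonneg fun i _ => Finset.sum_nonneg fun j _ => mul_nonneg (hW₀ i j) (sq_nonneg _)
    rw [star_trivial]
    linarith

noncomputable def normalizedAdjacency (W : Matrix ι ι ℝ) : Matrix ι ι ℝ :=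
  diagonal (fun i => 1 / √(∑ j, W i j)) * W * diagonal (fun i => 1 / √(∑ j, W i j))

theorem one_sub_normalizedAdjacency {W : Matrix ι ι ℝ} (hW : ∀ i, 0 < ∑ j, W i j) :
    1 - normalizedAdjacency W =
      diagonal (fun i => 1 / √(∑ j, W i j)) * (diagonal (fun i => ∑ j, W i j) - W) *
        diagonal (fun i => 1 / √(∑ j, W i j)) := by
  have hdiag : diagonal (fun i => 1 / √(∑ j, W i j)) * diagonal (fun i => ∑ j, W i j) *
      diagonal (fun i => 1 / √(∑ j, W i j)) = 1 := by
    rw [diagonal_mul_diagonal, diagonal_mul_diagonal, ← diagonal_one]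
    congr 1
    funext i
    have hsq := Real.mul_self_sqrt (hW i).le
    have hne : √(∑ j, W i j) ≠ 0 := (Real.sqrt_pos.mpr (hW i)).ne'
    field_simp
    linarith
  rw [Matrix.mul_sub, Matrix.sub_mul, hdiag, normalizedAdjacency]

theorem posSemidef_one_sub_normalizedAdjacency {W : Matrix ι ι ℝ} (hW : Wᵀ = W)
    (hW₀ : ∀ i j, 0 ≤ W i j) (hW₁ : ∀ i, 0 < ∑ j, W i j) :
    (1 - normalizedAdjacency W).PosSemidef := by
  rw [one_sub_normalizedAdjacency hW₁]
  simpa [diagonal_conjTranspose] using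
    (posSemidef_diagonal_sum_sub hW hW₀).conjTranspose_mul_mul_same
      (diagonal (fun i => 1 / √(∑ j, W i j)))

variable {M : Matrix ι ι ℝ} {μ : ℝ} {Y P : Matrix ι κ ℝ}

theorem lgcObjective_le (hM : Mᵀ = M) (hA : (M + μ • 1).PosDef)
    (hP : (M + μ • 1) * P = μ • Y) (F : Matrix ι κ ℝ) :
    lgcObjective M μ Y P ≤ lgcObjective M μ Y F := by
  rw [lgcObjective_eq_add hM hP F, le_add_iff_nonneg_right, ← conjTranspose_eq_transpose_of_trivial]
  exact (hA.posSemidef.conjTranspose_mul_mul_same _).trace_nonneg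

theorem eq_of_lgcObjective_eq (hM : Mᵀ = M) (hA : (M + μ • 1).PosDef)
    (hP : (M + μ • 1) * P = μ • Y) {F : Matrix ι κ ℝ}
    (hF : lgcObjective M μ Y F = lgcObjective M μ Y P) : F = P := by
  rw [lgcObjective_eq_add hM hP F, add_eq_left, ← conjTranspose_eq_transpose_of_trivial,
    hA.trace_conjTranspose_mul_mul_eq_zero_iff] at hF
  exact sub_eq_zero.mp hF

end Real

end Matrix

open Matrix

theorem lgc_closed_form_unique_minimizer_general
    (n c : ℕ)
    (W : Matrix (Fin n) (Fin n) ℝ)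
    (hWsym : Wᵀ = W) (hWnn : ∀ i j, 0 ≤ W i j)
    (hWrow : ∀ i, 0 < ∑ j, W i j)
    (S : Matrix (Fin n) (Fin n) ℝ)
    (hS : S = Matrix.diagonal (fun i => 1 / Real.sqrt (∑ j, W i j)) * W *
              Matrix.diagonal (fun i => 1 / Real.sqrt (∑ j, W i j)))
    (μ : ℝ) (hμ : 0 < μ)
    (Y : Matrix (Fin n) (Fin c) ℝ)
    (Fstar : Matrix (Fin n) (Fin c) ℝ)
    (hFstar : Fstar = μ • ((1 + μ) • (1 : Matrix (Fin n) (Fin n) ℝ) - S)⁻¹ * Y) :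
    IsUnit ((1 + μ) • (1 : Matrix (Fin n) (Fin n) ℝ) - S) ∧
    (∀ F : Matrix (Fin n) (Fin c) ℝ,
      Matrix.trace (Fstarᵀ * (1 - S) * Fstar) + μ * ∑ i, ∑ j, (Fstar i j - Y i j) ^ 2 ≤
      Matrix.trace (Fᵀ * (1 - S) * F) + μ * ∑ i, ∑ j, (F i j - Y i j) ^ 2) ∧
    (∀ F : Matrix (Fin n) (Fin c) ℝ,
      Matrix.trace (Fᵀ * (1 - S) * F) + μ * ∑ i, ∑ j, (F i j - Y i j) ^ 2 =
      Matrix.trace (Fstarᵀ * (1 - S) * Fstar) + μ * ∑ i, ∑ j, (Fstar i j - Y i j) ^ 2 →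
      F = Fstar) := by
  have hL : (1 - S).PosSemidef := hS ▸ posSemidef_one_sub_normalizedAdjacency hWsym hWnn hWrow
  have hM : (1 - S)ᵀ = 1 - S := by
    simpa only [conjTranspose_eq_transpose_of_trivial] using hL.isHermitian.eq
  have hsplit : (1 + μ) • (1 : Matrix (Fin n) (Fin n) ℝ) - S = (1 - S) + μ • 1 := by
    rw [add_smul, one_smul]
    abel
  have hA : ((1 - S) + μ • 1).PosDef := PosDef.posSemidef_add hL (PosDef.one.smul hμ)
  have hP : ((1 - S) + μ • 1) * Fstar = μ • Y := by
    rw [hFstar, hsplit, Matrix.smul_mul, Matrix.mul_smul,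
      mul_nonsing_inv_cancel_left _ _ ((isUnit_iff_isUnit_det _).mp hA.isUnit)]
  rw [hsplit]
  exact ⟨hA.isUnit, lgcObjective_le hM hA hP, fun F hF => eq_of_lgcObjective_eq hM hA hP hF⟩

/-- Let `W` be an `n × n` symmetric entrywise nonnegative real matrix with
all row sums strictly positive, `D = diag(W 1ₙ)`, `S = D^{-1/2} W D^{-1/2}`, `μ > 0` and
`Y ∈ ℝ^{n×c}`.  Then `(1+μ)Iₙ - S` is invertible, and `F* = μ((1+μ)Iₙ - S)⁻¹ Y` is the
unique minimizer over `F ∈ ℝ^{n×c}` of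
`L(F) = trace(Fᵀ(Iₙ - S)F) + μ ‖F - Y‖²_F`. -/
theorem lgc_closed_form_unique_minimizer
    (n c : ℕ)
    (W : Matrix (Fin n) (Fin n) ℝ)
    (hWsym : Wᵀ = W) (hWnn : ∀ i j, 0 ≤ W i j)
    (hWrow : ∀ i, 0 < ∑ j, W i j)
    (D S : Matrix (Fin n) (Fin n) ℝ)
    (hD : D = Matrix.diagonal (fun i => ∑ j, W i j))
    (hS : S = Matrix.diagonal (fun i => 1 / Real.sqrt (∑ j, W i j)) * W *
              Matrix.diagonal (fun i => 1 / Real.sqrt (∑ j, W i j)))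
    (μ : ℝ) (hμ : 0 < μ)
    (Y : Matrix (Fin n) (Fin c) ℝ)
    (Fstar : Matrix (Fin n) (Fin c) ℝ)
    (hFstar : Fstar = μ • ((1 + μ) • (1 : Matrix (Fin n) (Fin n) ℝ) - S)⁻¹ * Y) :
    IsUnit ((1 + μ) • (1 : Matrix (Fin n) (Fin n) ℝ) - S) ∧
    (∀ F : Matrix (Fin n) (Fin c) ℝ,
      Matrix.trace (Fstarᵀ * (1 - S) * Fstar) + μ * ∑ i, ∑ j, (Fstar i j - Y i j) ^ 2 ≤
      Matrix.trace (Fᵀ * (1 - S) * F) + μ * ∑ i, ∑ j, (F i j - Y i j) ^ 2) ∧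
    (∀ F : Matrix (Fin n) (Fin c) ℝ,
      Matrix.trace (Fᵀ * (1 - S) * F) + μ * ∑ i, ∑ j, (F i j - Y i j) ^ 2 =
      Matrix.trace (Fstarᵀ * (1 - S) * Fstar) + μ * ∑ i, ∑ j, (Fstar i j - Y i j) ^ 2 →
      F = Fstar) :=
  lgc_closed_form_unique_minimizer_general n c W hWsym hWnn hWrow S hS μ hμ Y Fstar hFstar
end
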